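/- Let H be a Hopf algebra over a field k, and let C be a left (or right) coideal subalgebra of H with S(C) = C, where S is the antipode. Then C is a Hopf subalgebra of H, i.e. C is also a subcoalgebra: Δ(C) ⊆ C ⊗ C. -/

import Mathlib

open TensorProduct

/-!
The antipode of a Hopf algebra is an anti-coalgebra map, `Δ ∘ S = (S ⊗ S) ∘ τ ∘ Δ`: both sides
are convolution inverses of `Δ` in `Hom(H, H ⊗ H)`. Hence if `Δ(C) ⊆ H ⊗ C` and `S(C) = C`, then
`Δ(C) = Δ(S(C)) ⊆ (S ⊗ S)(C ⊗ H) ⊆ C ⊗ H` as well, and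
`(H ⊗ C) ∩ (C ⊗ H) = C ⊗ C` because `H ⧸ C` is flat over the field.
-/

open Coalgebra HopfAlgebra LinearMap WithConv
open scoped RingTheory.LinearMap

section AntipodeComul

variable {R A : Type*} [CommSemiring R] [Semiring A] [HopfAlgebra R A]

local notation "𝑺" => antipode R (A := A)

lemma map_comul_comp_comul :
    ((δ ⊗ₘ δ) ∘ₗ δ : A →ₗ[R] (A ⊗[R] A) ⊗[R] (A ⊗[R] A)) =
      (TensorProduct.assoc R A A (A ⊗[R] A)).symm.toLinearMap ∘ₗ
        lTensor A (TensorProduct.assoc R A A A).toLinearMap ∘ₗ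
        lTensor A (rTensor A δ ∘ₗ δ) ∘ₗ δ := by
  simp only [coassoc_simps]

lemma rTensor_mul_antipode_rTensor_comp_rTensor_comul_comp_comul :
    rTensor A (mul' R A ∘ₗ rTensor A 𝑺) ∘ₗ rTensor A δ ∘ₗ (δ : A →ₗ[R] A ⊗[R] A) =
      TensorProduct.mk R A A 1 := by
  rw [← LinearMap.comp_assoc, ← rTensor_comp, LinearMap.comp_assoc, mul_antipode_rTensor_comul,
    rTensor_comp, LinearMap.comp_assoc, rTensor_counit_comp_comul]
  ext; simp

/-- In Sweedler notation: `∑ S(a₂) a₃ ⊗ S(a₁) a₄ = ε(a) 1 ⊗ 1`. -/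
lemma comul_left_inv :
    toConv ((𝑺 ⊗ₘ 𝑺) ∘ₗ (TensorProduct.comm R A A).toLinearMap ∘ₗ δ) *
      toConv (δ : A →ₗ[R] A ⊗[R] A) = 1 := by
  apply WithConv.ext
  simp only [LinearMap.convMul_def, LinearMap.convOne_def, ofConv_toConv]
  have contract_middle :
      mul' R (A ⊗[R] A) ∘ₗ (((𝑺 ⊗ₘ 𝑺) ∘ₗ (TensorProduct.comm R A A).toLinearMap) ⊗ₘ id) ∘ₗ
        (TensorProduct.assoc R A A (A ⊗[R] A)).symm.toLinearMap ∘ₗ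
        lTensor A (TensorProduct.assoc R A A A).toLinearMap =
      lTensor A (mul' R A ∘ₗ rTensor A 𝑺) ∘ₗ (TensorProduct.leftComm R A A A).toLinearMap ∘ₗ
        lTensor A (rTensor A (mul' R A ∘ₗ rTensor A 𝑺)) := by
    ext; simp
  have contract_outer :
      lTensor A (mul' R A ∘ₗ rTensor A 𝑺) ∘ₗ (TensorProduct.leftComm R A A A).toLinearMap ∘ₗ
        lTensor A (TensorProduct.mk R A A 1) =
      TensorProduct.mk R A A 1 ∘ₗ mul' R A ∘ₗ rTensor A 𝑺 := by
    ext; simp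
  calc mul' R (A ⊗[R] A) ∘ₗ (((𝑺 ⊗ₘ 𝑺) ∘ₗ (TensorProduct.comm R A A).toLinearMap ∘ₗ δ) ⊗ₘ δ) ∘ₗ δ
      = (mul' R (A ⊗[R] A) ∘ₗ (((𝑺 ⊗ₘ 𝑺) ∘ₗ (TensorProduct.comm R A A).toLinearMap) ⊗ₘ id) ∘ₗ
          (TensorProduct.assoc R A A (A ⊗[R] A)).symm.toLinearMap ∘ₗ
          lTensor A (TensorProduct.assoc R A A A).toLinearMap) ∘ₗ
          lTensor A (rTensor A δ ∘ₗ δ) ∘ₗ δ := by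
        simp only [LinearMap.comp_assoc]
        rw [← map_comul_comp_comul, ← LinearMap.comp_assoc δ (δ ⊗ₘ δ), ← TensorProduct.map_comp,
          LinearMap.id_comp]
        rfl
    _ = (lTensor A (mul' R A ∘ₗ rTensor A 𝑺) ∘ₗ (TensorProduct.leftComm R A A A).toLinearMap ∘ₗ
          lTensor A (rTensor A (mul' R A ∘ₗ rTensor A 𝑺))) ∘ₗ
          lTensor A (rTensor A δ ∘ₗ δ) ∘ₗ δ := by rw [contract_middle]
    _ = (lTensor A (mul' R A ∘ₗ rTensor A 𝑺) ∘ₗ (TensorProduct.leftComm R A A A).toLinearMap ∘ₗ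
          lTensor A (TensorProduct.mk R A A 1)) ∘ₗ δ := by
        rw [← rTensor_mul_antipode_rTensor_comp_rTensor_comul_comp_comul]
        simp only [LinearMap.comp_assoc, lTensor_comp]
    _ = TensorProduct.mk R A A 1 ∘ₗ mul' R A ∘ₗ rTensor A 𝑺 ∘ₗ δ := by
        rw [contract_outer]; simp only [LinearMap.comp_assoc]
    _ = Algebra.linearMap R (A ⊗[R] A) ∘ₗ ε := by
        rw [mul_antipode_rTensor_comul]
        ext; simp [Algebra.algebraMap_eq_smul_one, smul_tmul', Algebra.TensorProduct.one_def]

lemma comul_comp_antipode :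
    δ ∘ₗ 𝑺 = (𝑺 ⊗ₘ 𝑺) ∘ₗ (TensorProduct.comm R A A).toLinearMap ∘ₗ (δ : A →ₗ[R] A ⊗[R] A) :=
  congrArg ofConv (left_inv_eq_right_inv comul_left_inv comul_right_inv).symm

lemma comul_antipode_mem_range_map {M N : Type*} [AddCommMonoid M] [Module R M]
    [AddCommMonoid N] [Module R N] {f : M →ₗ[R] A} {g : N →ₗ[R] A} {u : M →ₗ[R] M}
    {v : N →ₗ[R] N} (hu : 𝑺 ∘ₗ f = f ∘ₗ u) (hv : 𝑺 ∘ₗ g = g ∘ₗ v) {a : A}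
    (ha : δ a ∈ range (map f g)) : δ (𝑺 a) ∈ range (map g f) := by
  obtain ⟨y, hy⟩ := ha
  refine ⟨map v u (TensorProduct.comm R M N y), ?_⟩
  rw [← LinearMap.comp_apply (δ : A →ₗ[R] A ⊗[R] A), comul_comp_antipode]
  simp only [LinearMap.comp_apply, LinearEquiv.coe_coe, ← hy, map_comm, map_map, hu, hv]

end AntipodeComul

lemma range_map_id_subtype_inf_range_map_subtype_id_le {R M N : Type*} [CommRing R]
    [AddCommGroup M] [Module R M] [AddCommGroup N] [Module R N]
    (P : Submodule R M) (Q : Submodule R N) [Module.Flat R (M ⧸ P)] :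
    range (map id Q.subtype) ⊓ range (map P.subtype id) ≤ range (map P.subtype Q.subtype) := by
  rintro _ ⟨⟨y, rfl⟩, hP⟩
  have hy : y ∈ ker (rTensor Q P.mkQ) := by
    rw [mem_ker]
    apply Module.Flat.lTensor_preserves_injective_linearMap Q.subtype Q.injective_subtype
    rw [map_zero, ← comp_apply, lTensor_comp_rTensor, ← rTensor_comp_lTensor, comp_apply,
      ← mem_ker, rTensor_mkQ]
    exact hP
  rw [rTensor_mkQ] at hy
  obtain ⟨z, rfl⟩ := hy
  exact ⟨z, by rw [← lTensor_comp_rTensor]; rfl⟩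

theorem stmt5_general (k : Type*) [Field k] (H : Type*) [Ring H] [HopfAlgebra k H]
    (C : Subalgebra k H)
    (hC : (∀ c ∈ C, Coalgebra.comul (R := k) c ∈
        LinearMap.range (TensorProduct.map (LinearMap.id : H →ₗ[k] H)
          (Subalgebra.toSubmodule C).subtype)) ∨
      (∀ c ∈ C, Coalgebra.comul (R := k) c ∈
        LinearMap.range (TensorProduct.map (Subalgebra.toSubmodule C).subtype
          (LinearMap.id : H →ₗ[k] H))))
    (hS : HopfAlgebra.antipode (R := k) (A := H) '' (C : Set H) = (C : Set H)) :
    ∀ c ∈ C, Coalgebra.comul (R := k) c ∈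
      LinearMap.range (TensorProduct.map (Subalgebra.toSubmodule C).subtype
        (Subalgebra.toSubmodule C).subtype) := by
  set M := Subalgebra.toSubmodule C
  have antipode_mem : ∀ x ∈ M, antipode k x ∈ M := fun x hx ↦ hS.subset ⟨x, hx, rfl⟩
  have antipode_comp_subtype : antipode k ∘ₗ M.subtype = M.subtype ∘ₗ (antipode k).restrict antipode_mem := rfl
  intro c hc
  obtain ⟨d, hd, rfl⟩ := hS.symm.subset hc
  have inter_le := range_map_id_subtype_inf_range_map_subtype_id_le M M
  rcases hC with hL | hR
  · exact inter_le ⟨hL _ hc, comul_antipode_mem_range_map (f := id) rfl antipode_comp_subtype (hL d hd)⟩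
  · exact inter_le ⟨comul_antipode_mem_range_map (g := id) antipode_comp_subtype rfl (hR d hd), hR _ hc⟩

/-- a left (or right) coideal subalgebra `C` of a Hopf algebra `H` with
`S(C) = C` is a Hopf subalgebra: `Δ(C) ⊆ C ⊗ C`. -/
theorem stmt5 (k : Type*) [Field k] (H : Type*) [Ring H] [HopfAlgebra k H]
    (hbij : Function.Bijective (HopfAlgebra.antipode (R := k) (A := H)))
    (C : Subalgebra k H)
    (hC : (∀ c ∈ C, Coalgebra.comul (R := k) c ∈
        LinearMap.range (TensorProduct.map (LinearMap.id : H →ₗ[k] H)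
          (Subalgebra.toSubmodule C).subtype)) ∨
      (∀ c ∈ C, Coalgebra.comul (R := k) c ∈
        LinearMap.range (TensorProduct.map (Subalgebra.toSubmodule C).subtype
          (LinearMap.id : H →ₗ[k] H))))
    (hS : HopfAlgebra.antipode (R := k) (A := H) '' (C : Set H) = (C : Set H)) :
    ∀ c ∈ C, Coalgebra.comul (R := k) c ∈
      LinearMap.range (TensorProduct.map (Subalgebra.toSubmodule C).subtype
        (Subalgebra.toSubmodule C).subtype) :=
  stmt5_general k H C hC hS
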